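/- Let O = T² × (−h,0) with h > 0, where T² is the two-dimensional torus. Let β ∈ ℝ and let f : closure(O) → ℝ be of class C³ with ∂₃f(x_H, −h) = 0 and ∂₃f(x_H, 0) + β f(x_H, 0) = 0 for all x_H ∈ T² (periodic in the horizontal variables). Then ∑_{i,j=1}^3 ∫_O |∂²_{ij} f|² dx = ∫_O |Δf|² dx − 2β ∫_{T²} |∇_H f(x_H, 0)|² dx_H, where ∇_H = (∂₁, ∂₂). -/

import Mathlib

noncomputable section

open MeasureTheory
open scoped BigOperators

/-- The standard basis vectors of `ℝ³ = ℝ × ℝ × ℝ`. -/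
def ee : Fin 3 → ℝ × ℝ × ℝ := ![(1, 0, 0), (0, 1, 0), (0, 0, 1)]

/-- Partial derivative `∂ᵢ g` in the `i`-th coordinate direction. -/
def pd (i : Fin 3) (g : ℝ × ℝ × ℝ → ℝ) (x : ℝ × ℝ × ℝ) : ℝ :=
  fderiv ℝ g x (ee i)

/-- Second partial derivative `∂ᵢ∂ⱼ g`. -/
def pd2 (i j : Fin 3) (g : ℝ × ℝ × ℝ → ℝ) (x : ℝ × ℝ × ℝ) : ℝ :=
  pd i (pd j g) x

/-- A fundamental domain for the cylinder `O = 𝕋² × (−h, 0)`. -/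
def cyl (h : ℝ) : Set (ℝ × ℝ × ℝ) :=
  Set.Ioo (0:ℝ) 1 ×ˢ (Set.Ioo (0:ℝ) 1 ×ˢ Set.Ioo (-h) 0)

/-- A fundamental domain for the torus `𝕋²`. -/
def sqT : Set (ℝ × ℝ) := Set.Ioo (0:ℝ) 1 ×ˢ Set.Ioo (0:ℝ) 1

/-- Periodicity in the horizontal variables (so that `f` lives on `𝕋² × ℝ`). -/
def Per3 {α : Type*} (f : ℝ × ℝ × ℝ → α) : Prop :=
  (∀ x : ℝ × ℝ × ℝ, f (x.1 + 1, x.2.1, x.2.2) = f x) ∧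
  (∀ x : ℝ × ℝ × ℝ, f (x.1, x.2.1 + 1, x.2.2) = f x)

/-!
Pointwise, `(Δf)² - |D²f|² = 2 ∑_{i<j} (∂ᵢᵢf ∂ⱼⱼf - (∂ᵢⱼf)²)`. For a horizontal index `i`,
integrating `(∂ᵢⱼf)²` by parts first in `xⱼ` and then in `xᵢ` turns it into `∂ᵢᵢf ∂ⱼⱼf` plus the
flux of `∂ᵢf ∂ᵢⱼf` through the faces normal to `eⱼ`. Horizontal fluxes cancel by periodicity; on
the faces `x₃ = -h` and `x₃ = 0`, differentiating the Neumann and Robin conditions tangentially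
gives `∂ᵢ∂₃f = 0` and `∂ᵢ∂₃f = -β ∂ᵢf`.
-/

open Set

variable {g g' u v w : ℝ × ℝ × ℝ → ℝ}

lemma ContDiff.pd {m n : WithTop ℕ∞} (hg : ContDiff ℝ m g) (hnm : n + 1 ≤ m) (i : Fin 3) :
    ContDiff ℝ n (pd i g) :=
  (hg.fderiv_right hnm).clm_apply contDiff_const

lemma pd_mul (hu : Differentiable ℝ u) (hv : Differentiable ℝ v) (i : Fin 3) (x : ℝ × ℝ × ℝ) :
    pd i (fun y => u y * v y) x = pd i u x * v x + u x * pd i v x := by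
  simp only [pd, fderiv_fun_mul (hu x) (hv x), add_apply, smul_apply, smul_eq_mul]
  ring

lemma pd_pd_eq_fderiv_fderiv (hg : Differentiable ℝ (fderiv ℝ g)) (i j : Fin 3) (x : ℝ × ℝ × ℝ) :
    pd i (pd j g) x = fderiv ℝ (fderiv ℝ g) x (ee i) (ee j) := by
  rw [pd, show pd j g = fun y => fderiv ℝ g y (ee j) from rfl,
    fderiv_clm_apply (hg x) (differentiableAt_const (ee j))]
  simp

lemma pd_comm (hg : ContDiff ℝ 2 g) (i j : Fin 3) (x : ℝ × ℝ × ℝ) :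
    pd i (pd j g) x = pd j (pd i g) x := by
  have hd : Differentiable ℝ (fderiv ℝ g) :=
    (hg.fderiv_right (m := 1) (by norm_num)).differentiable one_ne_zero
  rw [pd_pd_eq_fderiv_fderiv hd, pd_pd_eq_fderiv_fderiv hd]
  exact hg.contDiffAt.isSymmSndFDerivAt (by simp) _ _

lemma Per3.mul (hu : Per3 u) (hv : Per3 v) : Per3 (fun x => u x * v x) :=
  ⟨fun x => by simp only [hu.1, hv.1], fun x => by simp only [hu.2, hv.2]⟩

lemma Per3.pd (hg : Per3 g) (i : Fin 3) : Per3 (pd i g) := by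
  have hshift : ∀ e : ℝ × ℝ × ℝ, (∀ x, g (x + e) = g x) →
      ∀ x, fderiv ℝ g (x + e) = fderiv ℝ g x := fun e he x => by
    rw [← fderiv_comp_add_right, funext he]
  refine ⟨fun x => ?_, fun x => ?_⟩
  · have he : ∀ y : ℝ × ℝ × ℝ, y + (1, 0, 0) = (y.1 + 1, y.2.1, y.2.2) := fun y => by
      ext <;> simp
    simp only [_root_.pd, ← he, hshift _ (fun y => by rw [he, hg.1])]
  · have he : ∀ y : ℝ × ℝ × ℝ, y + (0, 1, 0) = (y.1, y.2.1 + 1, y.2.2) := fun y => by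
      ext <;> simp
    simp only [_root_.pd, ← he, hshift _ (fun y => by rw [he, hg.2])]

lemma hasDerivAt_pd_comp {γ : ℝ → ℝ × ℝ × ℝ} {i : Fin 3} {t : ℝ}
    (hg : DifferentiableAt ℝ g (γ t)) (hγ : HasDerivAt γ (ee i) t) :
    HasDerivAt (fun s => g (γ s)) (pd i g (γ t)) t :=
  hg.hasFDerivAt.comp_hasDerivAt t hγ

lemma hasDerivAt_coord0 (b c t : ℝ) :
    HasDerivAt (fun s : ℝ => ((s, b, c) : ℝ × ℝ × ℝ)) (ee 0) t := by
  simpa [ee] using (hasDerivAt_id t).prodMk ((hasDerivAt_const t b).prodMk (hasDerivAt_const t c))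

lemma hasDerivAt_coord1 (a c t : ℝ) :
    HasDerivAt (fun s : ℝ => ((a, s, c) : ℝ × ℝ × ℝ)) (ee 1) t := by
  simpa [ee] using (hasDerivAt_const t a).prodMk ((hasDerivAt_id t).prodMk (hasDerivAt_const t c))

lemma hasDerivAt_coord2 (a b t : ℝ) :
    HasDerivAt (fun s : ℝ => ((a, b, s) : ℝ × ℝ × ℝ)) (ee 2) t := by
  simpa [ee] using (hasDerivAt_const t a).prodMk ((hasDerivAt_const t b).prodMk (hasDerivAt_id t))

lemma integral_Ioo_pd_comp {γ : ℝ → ℝ × ℝ × ℝ} {i : Fin 3} (hγ : ∀ t, HasDerivAt γ (ee i) t)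
    (hw : ContDiff ℝ 1 w) {a b : ℝ} (hab : a ≤ b) :
    ∫ t in Ioo a b, pd i w (γ t) = w (γ b) - w (γ a) := by
  have hγc : Continuous γ := continuous_iff_continuousAt.2 fun t => (hγ t).continuousAt
  rw [← integral_Ioc_eq_integral_Ioo, ← intervalIntegral.integral_of_le hab]
  exact intervalIntegral.integral_eq_sub_of_hasDerivAt
    (fun t _ => hasDerivAt_pd_comp (hw.differentiable one_ne_zero _) (hγ t))
    (((hw.pd (n := 0) (by simp) i).continuous.comp hγc).intervalIntegrable a b)

lemma pd_eq_of_eq_on_plane (hg : Differentiable ℝ g) (hg' : Differentiable ℝ g') {c : ℝ}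
    (heq : ∀ a b, g (a, b, c) = g' (a, b, c)) {i : Fin 3} (hi : i ≠ 2) (a b : ℝ) :
    pd i g (a, b, c) = pd i g' (a, b, c) := by
  fin_cases i
  · have h' := hasDerivAt_pd_comp (hg' _) (hasDerivAt_coord0 b c a)
    simp only [← heq] at h'
    exact (hasDerivAt_pd_comp (hg _) (hasDerivAt_coord0 b c a)).unique h'
  · have h' := hasDerivAt_pd_comp (hg' _) (hasDerivAt_coord1 a c b)
    simp only [← heq] at h'
    exact (hasDerivAt_pd_comp (hg _) (hasDerivAt_coord1 a c b)).unique h'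
  · exact absurd rfl hi

lemma Continuous.integrableOn_of_isBounded {X : Type*} [MetricSpace X] [ProperSpace X]
    [MeasurableSpace X] [OpensMeasurableSpace X] {μ : Measure X} [IsFiniteMeasureOnCompacts μ]
    {F : X → ℝ} (hF : Continuous F) {s : Set X} (hs : Bornology.IsBounded s) :
    IntegrableOn F s μ :=
  (hF.continuousOn.integrableOn_compact hs.isCompact_closure).mono_set subset_closure

lemma isBounded_cyl (h : ℝ) : Bornology.IsBounded (cyl h) :=
  Metric.isBounded_Ioo 0 1 |>.prod (Metric.isBounded_Ioo 0 1 |>.prod (Metric.isBounded_Ioo _ _))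

section Fubini

variable {Y : Type*} [MetricSpace Y] [ProperSpace Y] [MeasureSpace Y] [BorelSpace Y]
  [SigmaFinite (volume : Measure Y)]
  [IsFiniteMeasureOnCompacts (volume : Measure Y)]
  {F : ℝ × Y → ℝ} {s : Set ℝ} {t : Set Y}

lemma setIntegral_prod_of_continuous (hF : Continuous F) (hs : Bornology.IsBounded s)
    (ht : Bornology.IsBounded t) :
    ∫ z in s ×ˢ t, F z = ∫ x in s, ∫ y in t, F (x, y) :=
  setIntegral_prod F (hF.integrableOn_of_isBounded (hs.prod ht))

lemma setIntegral_prod_swap_of_continuous (hF : Continuous F) (hs : Bornology.IsBounded s)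
    (ht : Bornology.IsBounded t) :
    ∫ z in s ×ˢ t, F z = ∫ y in t, ∫ x in s, F (x, y) := by
  rw [Measure.volume_eq_prod, ← setIntegral_prod_swap]
  exact setIntegral_prod (fun z => F z.swap)
    ((hF.comp continuous_swap).integrableOn_of_isBounded (ht.prod hs))

end Fubini

lemma integral_cyl_pd0 {h : ℝ} (hw : ContDiff ℝ 1 w) (hp : Per3 w) :
    ∫ x in cyl h, pd 0 w x = 0 := by
  have hc : Continuous (pd 0 w) := (hw.pd (n := 0) (by simp) 0).continuous
  rw [cyl, setIntegral_prod_swap_of_continuous hc (Metric.isBounded_Ioo 0 1)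
    ((Metric.isBounded_Ioo 0 1).prod (Metric.isBounded_Ioo _ _))]
  have hline : ∀ q : ℝ × ℝ, ∫ a in Ioo (0 : ℝ) 1, pd 0 w (a, q) = 0 := fun q => by
    rw [integral_Ioo_pd_comp (hasDerivAt_coord0 q.1 q.2) hw zero_le_one]
    simpa using sub_eq_zero.2 (hp.1 (0, q))
  simp [hline]

lemma integral_cyl_pd1 {h : ℝ} (hw : ContDiff ℝ 1 w) (hp : Per3 w) :
    ∫ x in cyl h, pd 1 w x = 0 := by
  have hc : Continuous (pd 1 w) := (hw.pd (n := 0) (by simp) 1).continuous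
  rw [cyl, setIntegral_prod_of_continuous hc (Metric.isBounded_Ioo 0 1)
    ((Metric.isBounded_Ioo 0 1).prod (Metric.isBounded_Ioo _ _))]
  have hline : ∀ a z : ℝ, ∫ b in Ioo (0 : ℝ) 1, pd 1 w (a, b, z) = 0 := fun a z => by
    rw [integral_Ioo_pd_comp (hasDerivAt_coord1 a z) hw zero_le_one]
    simpa using sub_eq_zero.2 (hp.2 (a, 0, z))
  have hslice : ∀ a : ℝ, ∫ q in Ioo (0 : ℝ) 1 ×ˢ Ioo (-h) 0, pd 1 w (a, q) = 0 := fun a => by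
    rw [setIntegral_prod_swap_of_continuous (F := fun q => pd 1 w (a, q)) (by fun_prop)
      (Metric.isBounded_Ioo 0 1) (Metric.isBounded_Ioo _ _)]
    simp [hline]
  simp [hslice]

lemma integral_cyl_pd2 {h : ℝ} (hh : 0 ≤ h) (hw : ContDiff ℝ 1 w) :
    ∫ x in cyl h, pd 2 w x = ∫ p in sqT, (w (p.1, p.2, 0) - w (p.1, p.2, -h)) := by
  have hc : Continuous (pd 2 w) := (hw.pd (n := 0) (by simp) 2).continuous
  rw [cyl, sqT, setIntegral_prod_of_continuous hc (Metric.isBounded_Ioo 0 1)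
    ((Metric.isBounded_Ioo 0 1).prod (Metric.isBounded_Ioo _ _)),
    setIntegral_prod_of_continuous (by fun_prop) (Metric.isBounded_Ioo 0 1)
      (Metric.isBounded_Ioo 0 1)]
  refine setIntegral_congr_fun measurableSet_Ioo fun a _ => ?_
  rw [setIntegral_prod_of_continuous (F := fun q => pd 2 w (a, q)) (by fun_prop)
    (Metric.isBounded_Ioo 0 1) (Metric.isBounded_Ioo _ _)]
  refine setIntegral_congr_fun measurableSet_Ioo fun b _ => ?_
  exact integral_Ioo_pd_comp (hasDerivAt_coord2 a b) hw (neg_nonpos.2 hh)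

/-- The boundary term of `∫_O ∂ⱼ w`; the lateral faces contribute nothing, by periodicity. -/
def cylFlux (h : ℝ) (j : Fin 3) (w : ℝ × ℝ × ℝ → ℝ) : ℝ :=
  if j = 2 then ∫ p in sqT, (w (p.1, p.2, 0) - w (p.1, p.2, -h)) else 0

lemma integral_cyl_pd {h : ℝ} (hh : 0 ≤ h) (hw : ContDiff ℝ 1 w) (hp : Per3 w) (j : Fin 3) :
    ∫ x in cyl h, pd j w x = cylFlux h j w := by
  fin_cases j
  · simp [cylFlux, integral_cyl_pd0 hw hp]
  · simp [cylFlux, integral_cyl_pd1 hw hp]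
  · simp [cylFlux, integral_cyl_pd2 hh hw]

lemma integral_cyl_pd_mul {h : ℝ} (hh : 0 ≤ h) (hu : ContDiff ℝ 1 u) (hv : ContDiff ℝ 1 v)
    (hpu : Per3 u) (hpv : Per3 v) (j : Fin 3) :
    ∫ x in cyl h, pd j u x * v x
      = cylFlux h j (fun x => u x * v x) - ∫ x in cyl h, u x * pd j v x := by
  have hcu : Continuous (pd j u) := (hu.pd (n := 0) (by simp) j).continuous
  have hcv : Continuous (pd j v) := (hv.pd (n := 0) (by simp) j).continuous
  rw [← integral_cyl_pd hh (hu.mul hv) (hpu.mul hpv) j, eq_sub_iff_add_eq,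
    ← integral_add (f := fun x => pd j u x * v x) (g := fun x => u x * pd j v x)
    ((hcu.mul hv.continuous).integrableOn_of_isBounded (isBounded_cyl h))
    ((hu.continuous.mul hcv).integrableOn_of_isBounded (isBounded_cyl h))]
  simp only [pd_mul (hu.differentiable one_ne_zero) (hv.differentiable one_ne_zero)]

def hessMinor (g : ℝ × ℝ × ℝ → ℝ) (i j : Fin 3) (x : ℝ × ℝ × ℝ) : ℝ :=
  pd2 i i g x * pd2 j j g x - pd2 i j g x ^ 2

lemma sq_laplacian_sub_sum_sq_hessian (hg : ContDiff ℝ 2 g) (x : ℝ × ℝ × ℝ) :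
    (∑ i : Fin 3, pd2 i i g x) ^ 2 - ∑ i : Fin 3, ∑ j : Fin 3, pd2 i j g x ^ 2
      = 2 * (hessMinor g 0 1 x + hessMinor g 0 2 x + hessMinor g 1 2 x) := by
  simp only [Fin.sum_univ_three, hessMinor, pd2, pd_comm hg 1 0, pd_comm hg 2 0, pd_comm hg 2 1]
  ring

lemma integral_hessMinor {h : ℝ} (hh : 0 ≤ h) {f : ℝ × ℝ × ℝ → ℝ} (hf : ContDiff ℝ 3 f)
    (hp : Per3 f) {i : Fin 3} (hi : i ≠ 2) (j : Fin 3) :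
    ∫ x in cyl h, hessMinor f i j x = -cylFlux h j (fun x => pd i f x * pd2 i j f x) := by
  have hf2 : ∀ k, ContDiff ℝ 2 (pd k f) := fun k => hf.pd (by norm_num) k
  have hf1 : ∀ k, ContDiff ℝ 1 (pd k f) := fun k => hf.pd (by norm_num) k
  have hf11 : ∀ k l, ContDiff ℝ 1 (pd k (pd l f)) := fun k l => (hf2 l).pd (by norm_num) k
  have hp1 : ∀ k, Per3 (pd k f) := hp.pd
  have hp11 : ∀ k l, Per3 (pd k (pd l f)) := fun k l => (hp1 l).pd k
  have hc : ∀ k l, Continuous (pd k (pd l f)) := fun k l => (hf11 k l).continuous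
  simp only [hessMinor, pd2]
  have hperiodic : ∫ x in cyl h, pd i f x * pd i (pd j (pd j f)) x
      = -∫ x in cyl h, pd i (pd i f) x * pd j (pd j f) x := by
    have := integral_cyl_pd_mul hh (hf11 j j) (hf1 i) (hp11 j j) (hp1 i) i
    simp only [cylFlux, if_neg hi, zero_sub, mul_comm (pd j (pd j f) _)] at this
    simp only [mul_comm (pd i f _), this]
  have hsq : ∫ x in cyl h, pd i (pd j f) x ^ 2
      = cylFlux h j (fun x => pd i f x * pd i (pd j f) x)
        + ∫ x in cyl h, pd i (pd i f) x * pd j (pd j f) x := calc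
    _ = ∫ x in cyl h, pd j (pd i f) x * pd i (pd j f) x := by
      congr 1 with x
      rw [sq, pd_comm (hf.of_le (by norm_num)) i j]
    _ = cylFlux h j (fun x => pd i f x * pd i (pd j f) x)
        - ∫ x in cyl h, pd i f x * pd j (pd i (pd j f)) x :=
      integral_cyl_pd_mul hh (hf1 i) (hf11 i j) (hp1 i) (hp11 i j) j
    _ = _ := by simp only [pd_comm (hf2 j) j i, hperiodic, sub_neg_eq_add]
  rw [integral_sub (f := fun x => pd i (pd i f) x * pd j (pd j f) x)
    (g := fun x => pd i (pd j f) x ^ 2)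
    ((hc i i).mul (hc j j) |>.integrableOn_of_isBounded (isBounded_cyl h))
    ((hc i j).pow 2 |>.integrableOn_of_isBounded (F := fun x => pd i (pd j f) x ^ 2)
      (isBounded_cyl h)), hsq]
  ring

lemma integral_sum_sq_hessian {h : ℝ} (hh : 0 ≤ h) {f : ℝ × ℝ × ℝ → ℝ} (hf : ContDiff ℝ 3 f)
    (hp : Per3 f) :
    ∑ i : Fin 3, ∑ j : Fin 3, ∫ x in cyl h, pd2 i j f x ^ 2
      = (∫ x in cyl h, (∑ i : Fin 3, pd2 i i f x) ^ 2)
        + 2 * (cylFlux h 2 (fun x => pd 0 f x * pd2 0 2 f x)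
          + cylFlux h 2 (fun x => pd 1 f x * pd2 1 2 f x)) := by
  have hc : ∀ i j, Continuous (pd2 i j f) := fun i j =>
    ((hf.pd (n := 2) (by norm_num) j).pd (n := 0) (by norm_num) i).continuous
  have hint : ∀ {F : ℝ × ℝ × ℝ → ℝ}, Continuous F → IntegrableOn F (cyl h) :=
    fun hF => hF.integrableOn_of_isBounded (isBounded_cyl h)
  have hm : ∀ i j, Continuous (hessMinor f i j) := fun i j => by unfold hessMinor; fun_prop
  calc ∑ i : Fin 3, ∑ j : Fin 3, ∫ x in cyl h, pd2 i j f x ^ 2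
      = ∫ x in cyl h, ∑ i : Fin 3, ∑ j : Fin 3, pd2 i j f x ^ 2 := by
        rw [integral_finsetSum _ fun i _ => hint (by fun_prop)]
        exact Finset.sum_congr rfl fun i _ =>
          (integral_finsetSum _ fun j _ => hint (by fun_prop)).symm
    _ = ∫ x in cyl h, ((∑ i : Fin 3, pd2 i i f x) ^ 2
          - 2 * (hessMinor f 0 1 x + hessMinor f 0 2 x + hessMinor f 1 2 x)) := by
        congr 1 with x
        linarith [sq_laplacian_sub_sum_sq_hessian (hf.of_le (by norm_num)) x]
    _ = (∫ x in cyl h, (∑ i : Fin 3, pd2 i i f x) ^ 2)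
          - 2 * ((∫ x in cyl h, hessMinor f 0 1 x) + (∫ x in cyl h, hessMinor f 0 2 x)
            + ∫ x in cyl h, hessMinor f 1 2 x) := by
        rw [integral_sub (hint (by fun_prop)) (hint (by fun_prop)), integral_const_mul,
          integral_add (hint (by fun_prop)) (hint (hm 1 2)),
          integral_add (hint (hm 0 1)) (hint (hm 0 2))]
    _ = _ := by
        rw [integral_hessMinor hh hf hp (by decide) 1, integral_hessMinor hh hf hp (by decide) 2,
          integral_hessMinor hh hf hp (by decide) 2, cylFlux, if_neg (by decide)]
        ring

lemma cylFlux_of_robin {h β : ℝ} {f : ℝ × ℝ × ℝ → ℝ} (hf : ContDiff ℝ 2 f)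
    (hbot : ∀ a b : ℝ, pd 2 f (a, b, -h) = 0)
    (htop : ∀ a b : ℝ, pd 2 f (a, b, 0) + β * f (a, b, 0) = 0) {i : Fin 3} (hi : i ≠ 2) :
    cylFlux h 2 (fun x => pd i f x * pd2 i 2 f x)
      = -β * ∫ p in sqT, pd i f (p.1, p.2, 0) ^ 2 := by
  have hdf : Differentiable ℝ f := hf.differentiable two_ne_zero
  have hd : Differentiable ℝ (pd 2 f) :=
    (hf.pd (n := 1) (by norm_num) 2).differentiable one_ne_zero
  have htop' : ∀ a b, pd2 i 2 f (a, b, 0) = -β * pd i f (a, b, 0) := fun a b => by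
    rw [pd2, pd_eq_of_eq_on_plane hd (hdf.const_mul (-β)) (fun a b => by linarith [htop a b]) hi,
      pd, fderiv_const_mul (hdf _)]
    rfl
  have hbot' : ∀ a b, pd2 i 2 f (a, b, -h) = 0 := fun a b => by
    rw [pd2, pd_eq_of_eq_on_plane hd (differentiable_const 0) hbot hi]
    simp [pd]
  rw [cylFlux, if_pos rfl, ← integral_const_mul]
  congr 1 with p
  rw [htop', hbot']
  ring

/-- Kadlec's formula on the cylinder `O = 𝕋² × (−h,0)`: for a `C³` function with
Neumann condition at the bottom and Robin condition `∂₃f + βf = 0` at the top,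
the `L²` norm of the Hessian equals the `L²` norm of the Laplacian minus
`2β ∫_{𝕋²} |∇_H f(·,0)|²`. -/
theorem statement4 (h β : ℝ) (hh : 0 < h) (f : ℝ × ℝ × ℝ → ℝ)
    (hf : ContDiff ℝ 3 f) (hper : Per3 f)
    (hbot : ∀ a b : ℝ, pd 2 f (a, b, -h) = 0)
    (htop : ∀ a b : ℝ, pd 2 f (a, b, 0) + β * f (a, b, 0) = 0) :
    (∑ i : Fin 3, ∑ j : Fin 3, ∫ x in cyl h, (pd2 i j f x) ^ 2)
      = (∫ x in cyl h, (∑ i : Fin 3, pd2 i i f x) ^ 2)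
        - 2 * β * ∫ p in sqT, ((pd 0 f (p.1, p.2, 0)) ^ 2 + (pd 1 f (p.1, p.2, 0)) ^ 2) := by
  have hf2 : ContDiff ℝ 2 f := hf.of_le (by norm_num)
  have hc : ∀ i, Continuous (pd i f) := fun i => (hf.pd (n := 0) (by norm_num) i).continuous
  have hint : ∀ i, IntegrableOn (fun p : ℝ × ℝ => pd i f (p.1, p.2, 0) ^ 2) sqT := fun i =>
    ((hc i).comp (by fun_prop)).pow 2 |>.integrableOn_of_isBounded
      ((Metric.isBounded_Ioo 0 1).prod (Metric.isBounded_Ioo 0 1))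
  rw [integral_sum_sq_hessian hh.le hf hper, cylFlux_of_robin hf2 hbot htop (i := 0) (by decide),
    cylFlux_of_robin hf2 hbot htop (i := 1) (by decide), integral_add (hint 0) (hint 1)]
  ring
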